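/- Let λ > 0 and t ≥ 0. The characteristic function of an auxiliary-Poisson distributed random variable θ ~ Π(t; λ) — defined as θ = Σ_{i=0}^{N_t - 1} τ_i where N_t ~ Poisson(λt) is independent of the i.i.d. sequence τ₀, τ₁, ... ~ Exp(λ) — is φ(ω) = exp( (iω/(λ - iω)) · λt ) for all ω ∈ ℝ. -/

import Mathlib

/-!
Conditioning on the independent count `N`, the characteristic function of `θ` is
`∑ₙ ℙ(N = n) φ(ω)ⁿ`, where `φ(ω) = λ / (λ - iω)` is the characteristic function of `Exp(λ)`.
Summing the Poisson weights against `zⁿ` gives `exp(λt (z - 1))`, and `φ(ω) - 1 = iω / (λ - iω)`.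
-/

open MeasureTheory ProbabilityTheory Complex

lemma charFun_expMeasure {r : ℝ} (hr : 0 < r) (t : ℝ) :
    charFun (expMeasure r) t = r / (r - t * I) := by
  have hdensity : ∀ x : ℝ, (gammaPDF 1 r x).toReal • cexp (t * x * I) =
      Set.indicator (Set.Ici 0) (fun x : ℝ => r * cexp ((t * I - r) * x)) x := by
    intro x
    simp only [gammaPDF_eq, Real.rpow_one, Real.Gamma_one, div_one, sub_self, Real.rpow_zero,
      mul_one]
    by_cases hx : 0 ≤ x
    · rw [if_pos hx, Set.indicator_of_mem (Set.mem_Ici.mpr hx),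
        ENNReal.toReal_ofReal (by positivity), Complex.real_smul]
      push_cast
      rw [mul_assoc, ← exp_add]
      ring_nf
    · simp [hx]
  have hre : (t * I - r).re < 0 := by simpa using hr
  rw [charFun_apply_real, expMeasure, gammaMeasure, integral_withDensity_eq_integral_toReal_smul
    (f := gammaPDF 1 r) (measurable_gammaPDFReal 1 r).ennreal_ofReal
    (.of_forall fun _ => ENNReal.ofReal_lt_top)]
  simp_rw [hdensity]
  rw [integral_indicator measurableSet_Ici, integral_Ici_eq_integral_Ioi, integral_const_mul,
    integral_exp_mul_complex_Ioi hre, ofReal_zero, mul_zero, exp_zero, ← neg_sub, div_neg,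
    neg_div, neg_neg, mul_one_div]

lemma hasSum_poisson_mul_pow (r : ℝ) (z : ℂ) :
    HasSum (fun n : ℕ => ((Real.exp (-r) * r ^ n / n.factorial : ℝ) : ℂ) * z ^ n)
      (cexp (r * (z - 1))) := by
  have hterm : (fun n : ℕ => ((Real.exp (-r) * r ^ n / n.factorial : ℝ) : ℂ) * z ^ n) =
      fun n => cexp (-r) * ((r * z) ^ n / n.factorial) := by
    funext n
    push_cast [ofReal_exp]
    ring
  have hexp := NormedSpace.expSeries_div_hasSum_exp ((r : ℂ) * z)
  rw [← exp_eq_exp_ℂ] at hexp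
  rw [hterm, show (r : ℂ) * (z - 1) = -r + r * z by ring, exp_add]
  exact hexp.mul_left _

lemma measurable_sum_range_of_measurable_length {Ω M : Type*} [MeasurableSpace Ω]
    [AddCommMonoid M] [MeasurableSpace M] [MeasurableAdd₂ M]
    {N : Ω → ℕ} {τ : ℕ → Ω → M} (hN : Measurable N) (hτ : ∀ i, Measurable (τ i)) :
    Measurable fun ω => ∑ i ∈ Finset.range (N ω), τ i ω :=
  (measurable_from_prod_countable_right (f := fun p : ℕ × Ω => ∑ i ∈ Finset.range p.1, τ i p.2)
    fun n => Finset.measurable_sum (Finset.range n) fun i _ => hτ i).comp (hN.prodMk measurable_id)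

lemma integral_comp_eq_tsum_of_indepFun {Ω β E : Type*} {mΩ : MeasurableSpace Ω}
    {μ : Measure Ω} [MeasurableSpace β] [NormedAddCommGroup E] [NormedSpace ℝ E]
    {N : Ω → ℕ} {Y : Ω → β} (hN : Measurable N) (hY : AEMeasurable Y μ) (hNY : IndepFun N Y μ)
    {F : ℕ → β → E} (hF : ∀ n, AEStronglyMeasurable (F n) (μ.map Y))
    (hint : Integrable (fun ω => F (N ω) (Y ω)) μ) :
    ∫ ω, F (N ω) (Y ω) ∂μ = ∑' n, μ.real {ω | N ω = n} • ∫ ω, F n (Y ω) ∂μ := by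
  have hfiber : ∀ n, MeasurableSet {ω | N ω = n} := fun n => hN (measurableSet_singleton n)
  have hcover : (⋃ n, {ω | N ω = n}) = Set.univ := by ext; simp
  have hindicator : ∀ n ω, ({n} : Set ℕ).indicator (1 : ℕ → ℝ) (N ω) =
      {ω | N ω = n}.indicator 1 ω := fun n ω => (Set.indicator_comp_right N (g := 1)).symm
  rw [← setIntegral_univ, ← hcover,
    integral_iUnion hfiber (pairwise_disjoint_fiber N) hint.integrableOn]
  refine tsum_congr fun n => ?_
  calc ∫ ω in {ω | N ω = n}, F (N ω) (Y ω) ∂μ = ∫ ω in {ω | N ω = n}, F n (Y ω) ∂μ :=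
        setIntegral_congr_fun (hfiber n) fun ω (hω : N ω = n) => by rw [hω]
    _ = ∫ ω, ({n} : Set ℕ).indicator (1 : ℕ → ℝ) (N ω) • F n (Y ω) ∂μ := by
        rw [← integral_indicator (hfiber n)]
        congr 1 with ω
        by_cases h : N ω = n <;> simp [h]
    _ = (∫ ω, ({n} : Set ℕ).indicator (1 : ℕ → ℝ) (N ω) ∂μ) • ∫ ω, F n (Y ω) ∂μ :=
        hNY.integral_fun_comp_smul_comp hN.aemeasurable hY
          (measurable_one.indicator (measurableSet_singleton n)).aestronglyMeasurable (hF n)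
    _ = μ.real {ω | N ω = n} • ∫ ω, F n (Y ω) ∂μ := by
        simp_rw [hindicator, integral_indicator_one (hfiber n)]

lemma charFun_map_sum_range_of_iIndepFun {Ω E : Type*} {mΩ : MeasurableSpace Ω}
    {P : Measure Ω} [NormedAddCommGroup E] [InnerProductSpace ℝ E]
    [SecondCountableTopology E] [MeasurableSpace E] [BorelSpace E] {ν : Measure E} {τ : ℕ → Ω → E}
    (hτ : ∀ i, AEMeasurable (τ i) P) (hind : iIndepFun τ P) (hlaw : ∀ i, P.map (τ i) = ν)
    (n : ℕ) (t : E) :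
    charFun (P.map fun ω => ∑ i ∈ Finset.range n, τ i ω) t = charFun ν t ^ n := by
  rw [(hind.restrict _).charFun_map_fun_finsetSum_eq_prod fun i _ => hτ i]
  simp [hlaw]

lemma integrable_cexp_I_mul_ofReal {Ω : Type*} {mΩ : MeasurableSpace Ω} {μ : Measure Ω}
    [IsFiniteMeasure μ] {X : Ω → ℝ} (hX : AEMeasurable X μ) (t : ℝ) :
    Integrable (fun ω => cexp (I * t * X ω)) μ :=
  (integrable_const (1 : ℝ)).mono' (by fun_prop) (.of_forall fun ω => by
    rw [mul_assoc, ← ofReal_mul, norm_exp_I_mul_ofReal])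

lemma charFun_map_real_eq_integral {Ω : Type*} {mΩ : MeasurableSpace Ω} {P : Measure Ω}
    {X : Ω → ℝ} (hX : AEMeasurable X P) (t : ℝ) :
    charFun (P.map X) t = ∫ ω, cexp (I * t * X ω) ∂P := by
  rw [charFun_apply_real, integral_map hX (by fun_prop)]
  simp_rw [mul_right_comm, mul_comm I]

/-- The characteristic function of an auxiliary-Poisson random variable
`θ = ∑_{i=0}^{N_t-1} τ_i` (with `N_t ~ Poisson(λt)` independent of i.i.d.
`τ_i ~ Exp(λ)`) is `φ(ω) = exp((iω/(λ-iω))·λt)`. -/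
theorem stmt_8 {Ω : Type*} [MeasureSpace Ω] [IsProbabilityMeasure (ℙ : Measure Ω)]
    (lam t : ℝ) (hlam : 0 < lam) (ht : 0 ≤ t)
    (N : Ω → ℕ) (τ : ℕ → Ω → ℝ)
    (hN : Measurable N) (hτ : ∀ i, Measurable (τ i))
    (hNdist : ∀ n : ℕ, ℙ {ω | N ω = n} =
      ENNReal.ofReal (Real.exp (-(lam * t)) * (lam * t) ^ n / n.factorial))
    (hτdist : ∀ i, Measure.map (τ i) ℙ = expMeasure lam)
    (hiid : iIndepFun τ ℙ)
    (hindep : IndepFun N (fun ω i => τ i ω) ℙ)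
    (θ : Ω → ℝ) (hθ : ∀ ω, θ ω = ∑ i ∈ Finset.range (N ω), τ i ω) :
    ∀ ω' : ℝ,
      ∫ ω, Complex.exp (Complex.I * ω' * θ ω) ∂ℙ =
        Complex.exp (Complex.I * ω' / (lam - Complex.I * ω') * (lam * t)) := by
  intro ω'
  simp_rw [hθ]
  have hpartial : ∀ n, ∫ ω, cexp (I * ω' * ∑ i ∈ Finset.range n, τ i ω) ∂ℙ =
      (lam / (lam - ω' * I)) ^ n := fun n => by
    rw [← charFun_map_real_eq_integral (by fun_prop), charFun_map_sum_range_of_iIndepFun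
      (fun i => (hτ i).aemeasurable) hiid hτdist, charFun_expMeasure hlam]
  rw [integral_comp_eq_tsum_of_indepFun (F := fun n y => cexp (I * ω' * ∑ i ∈ Finset.range n, y i))
    hN (by fun_prop) hindep (fun n => by fun_prop) (integrable_cexp_I_mul_ofReal
      (measurable_sum_range_of_measurable_length hN hτ).aemeasurable ω')]
  have hprob : ∀ n : ℕ, (ℙ : Measure Ω).real {ω | N ω = n} =
      Real.exp (-(lam * t)) * (lam * t) ^ n / n.factorial := fun n => by
    rw [measureReal_def, hNdist, ENNReal.toReal_ofReal (by positivity)]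
  simp_rw [hpartial, hprob, Complex.real_smul]
  rw [(hasSum_poisson_mul_pow (lam * t) _).tsum_eq]
  have hne : (lam : ℂ) - ω' * I ≠ 0 := fun h => by simpa [hlam.ne'] using congrArg re h
  congr 1
  field_simp
  push_cast
  ring
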